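/- arXiv:0906.1488 — 3 statements merged into one kernel-verified Lean document; each statement's English description precedes it below -/
import Mathlib

section
/- Let E be a finite-dimensional vector space (or finite free module) over a field of characteristic zero, and for 0 ≤ p ≤ k−1 let φ_p : S^p E ⊗ Λ^{k−p} E → S^{p+1} E ⊗ Λ^{k−p−1} E be the Koszul differential, given on basis elements by φ_p(e_{i_1}·…·e_{i_p} ⊗ e_{j_1}∧…∧e_{j_{k−p}}) = Σ_{t=1}^{k−p} (−1)^{t−1} e_{i_1}·…·e_{i_p}·e_{j_t} ⊗ e_{j_1}∧…∧ê_{j_t}∧…∧e_{j_{k−p}}. Then the Koszul complex 0 → Λ^k E → S^1E⊗Λ^{k−1}E → … → S^kE → 0 is exact. -/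
/-!
On the total space of all bidegrees, the Koszul differential `d = ∑ᵢ dᵢ` and the map
`h = ∑ⱼ hⱼ`, `hⱼ = ∂/∂xⱼ ⊗ (eⱼ ∧ -)`, satisfy `d ∘ d = 0` and `d h + h d = (p + q) · id` on
`S^p E ⊗ Λ^q E`: for `i ≠ j` the operators `dᵢ, dⱼ` and `dᵢ, hⱼ` anticommute, while
`dᵢ hᵢ + hᵢ dᵢ` multiplies by the exponent of `xᵢ` plus `[eᵢ occurs]`, which sum to `p + q`.
In characteristic zero `p + q` is invertible in positive total degree, so every cycle `z` is the
boundary of `h z / (p + q)`.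
-/

open Finset

namespace Koszul

variable (K : Type*) [Field K] [CharZero K] (n : ℕ)

/-- Coordinates of `S^p E ⊗ Λ^q E` for `E` a vector space with basis indexed by `Fin n`:
functions on the canonical basis (degree-`p` monomials ⊗ `q`-element subsets). -/
abbrev SL (p q : ℕ) : Type _ := (Sym (Fin n) p × {s : Finset (Fin n) // s.card = q}) → K

/-- The Koszul differential `φ_p : S^p E ⊗ Λ^{q+1} E → S^{p+1} E ⊗ Λ^q E`, defined on basis
elements by
`φ(m ⊗ e_{j_1}∧…∧e_{j_{q+1}}) = Σ_t (−1)^{t−1} (m·e_{j_t}) ⊗ e_{j_1}∧…∧ê_{j_t}∧…∧e_{j_{q+1}}`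
(written here in the dual coordinates). -/
noncomputable def phi (p q : ℕ) : SL K n p (q + 1) →ₗ[K] SL K n (p + 1) q where
  toFun F := fun ms =>
    ∑ j : Fin n,
      if h : (j ∈ (ms.1 : Multiset (Fin n)) ∧ j ∉ ms.2.1) then
        ((-1 : K) ^ (ms.2.1.filter (fun x => x < j)).card) *
          F (⟨(ms.1 : Multiset (Fin n)).erase j, by
                rw [Multiset.card_erase_of_mem h.1]
                simp [ms.1.2]⟩,
             ⟨insert j ms.2.1, by rw [card_insert_of_notMem h.2, ms.2.2]⟩)
      else 0
  map_add' F G := by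
    funext ms
    simp only [Pi.add_apply]
    rw [← Finset.sum_add_distrib]
    refine Finset.sum_congr rfl fun j _ => ?_
    split_ifs with h
    · ring
    · rw [add_zero]
  map_smul' c F := by
    funext ms
    simp only [RingHom.id_apply, Pi.smul_apply, smul_eq_mul, Finset.mul_sum]
    refine Finset.sum_congr rfl fun j _ => ?_
    split_ifs with h
    · ring
    · rw [mul_zero]

theorem sum_sum_eq_zero_of_antisymm {α M : Type*} [Fintype α] [AddCommMonoid M] (u : α → α → M)
    (hswap : ∀ i j, i ≠ j → u i j + u j i = 0) (hdiag : ∀ i, u i i = 0) :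
    ∑ i, ∑ j, u i j = 0 := by
  rw [← Finset.sum_product' univ univ u]
  refine Finset.sum_ninvolution Prod.swap (fun x => ?_) (fun x hx hswap => hx ?_)
    (fun _ => mem_univ _) Prod.swap_swap
  · obtain ⟨i, j⟩ := x
    obtain rfl | hij := eq_or_ne i j
    · simp [hdiag]
    · exact hswap i j hij
  · obtain ⟨i, j⟩ := x
    obtain rfl : i = j := congrArg Prod.snd hswap
    exact hdiag i

/-- Coordinates on `⨁_{p,q} S^p E ⊗ Λ^q E`, indexed by (monomial, subset) pairs of all degrees. -/
abbrev Total (ι R : Type*) : Type _ := Multiset ι → Finset ι → R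

section Total

variable {R : Type*} [CommRing R] {ι : Type*} [LinearOrder ι]

/-- `(-1) ^ (t - 1)` when `j` is the `t`-th element of `insert j s`. -/
def koszulSign (s : Finset ι) (j : ι) : R := (-1) ^ #{x ∈ s | x < j}

theorem koszulSign_insert {s : Finset ι} {i : ι} (hi : i ∉ s) (j : ι) :
    koszulSign (insert i s) j = (if i < j then -1 else 1) * (koszulSign s j : R) := by
  unfold koszulSign
  rw [filter_insert]
  split_ifs with h
  · rw [card_insert_of_notMem (by simp [hi]), pow_succ, mul_comm]
  · rw [one_mul]

theorem koszulSign_erase {s : Finset ι} {j : ι} (hj : j ∈ s) (i : ι) :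
    koszulSign s i = (if j < i then -1 else 1) * (koszulSign (s.erase j) i : R) := by
  conv_lhs => rw [← insert_erase hj]
  exact koszulSign_insert (notMem_erase j s) i

theorem koszulSign_mul_self (s : Finset ι) (j : ι) : koszulSign s j * koszulSign s j = (1 : R) := by
  rw [koszulSign, ← pow_add]
  exact Even.neg_one_pow ⟨_, rfl⟩

theorem ite_lt_eq_neg_ite_gt {i j : ι} (hij : i ≠ j) :
    (if i < j then (-1 : R) else 1) = -(if j < i then -1 else 1) := by
  rcases lt_or_gt_of_ne hij with h | h <;> simp [h, lt_asymm h]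

def diffAt (i : ι) : Module.End R (Total ι R) where
  toFun G m s := if i ∈ m ∧ i ∉ s then koszulSign s i * G (m.erase i) (insert i s) else 0
  map_add' G G' := by
    ext m s
    simp only [Pi.add_apply]
    split_ifs <;> ring
  map_smul' c G := by
    ext m s
    simp only [Pi.smul_apply, smul_eq_mul, RingHom.id_apply]
    split_ifs <;> ring

/-- The `j`-th summand of the contracting homotopy `∑ⱼ ∂/∂xⱼ ⊗ (eⱼ ∧ -)`; the factor
`count j m + 1` is the exponent brought down by `∂/∂xⱼ`. -/
def homotopyAt (j : ι) : Module.End R (Total ι R) where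
  toFun G m s := if j ∈ s then
    ((m.count j + 1 : ℕ) : R) * koszulSign (s.erase j) j * G (j ::ₘ m) (s.erase j) else 0
  map_add' G G' := by
    ext m s
    simp only [Pi.add_apply]
    split_ifs <;> ring
  map_smul' c G := by
    ext m s
    simp only [Pi.smul_apply, smul_eq_mul, RingHom.id_apply]
    split_ifs <;> ring

theorem diffAt_apply (i : ι) (G : Total ι R) (m : Multiset ι) (s : Finset ι) :
    diffAt i G m s = if i ∈ m ∧ i ∉ s then koszulSign s i * G (m.erase i) (insert i s) else 0 :=
  rfl

theorem homotopyAt_apply (j : ι) (G : Total ι R) (m : Multiset ι) (s : Finset ι) :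
    homotopyAt j G m s = if j ∈ s then
      ((m.count j + 1 : ℕ) : R) * koszulSign (s.erase j) j * G (j ::ₘ m) (s.erase j) else 0 :=
  rfl

theorem diffAt_mul_self (i : ι) : diffAt i * diffAt i = (0 : Module.End R (Total ι R)) := by
  ext G m s
  simp [diffAt_apply]

theorem diffAt_mul_add_of_ne {i j : ι} (hij : i ≠ j) :
    diffAt i * diffAt j + diffAt j * diffAt i = (0 : Module.End R (Total ι R)) := by
  ext G m s
  simp only [LinearMap.add_apply, Pi.add_apply, Module.End.mul_apply, diffAt_apply,
    LinearMap.zero_apply, Pi.zero_apply, Multiset.mem_erase_of_ne hij,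
    Multiset.mem_erase_of_ne hij.symm, mem_insert, hij, hij.symm, false_or]
  by_cases hC : i ∈ m ∧ j ∈ m ∧ i ∉ s ∧ j ∉ s
  · obtain ⟨him, hjm, his, hjs⟩ := hC
    simp only [him, hjm, his, hjs, not_false_eq_true, and_self, if_true]
    rw [Multiset.erase_comm, insert_comm, koszulSign_insert his, koszulSign_insert hjs,
      ite_lt_eq_neg_ite_gt hij]
    ring
  · split_ifs <;> first | ring1 | tauto

theorem diffAt_mul_homotopyAt_add_of_ne {i j : ι} (hij : i ≠ j) :
    diffAt i * homotopyAt j + homotopyAt j * diffAt i = (0 : Module.End R (Total ι R)) := by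
  ext G m s
  simp only [LinearMap.add_apply, Pi.add_apply, Module.End.mul_apply, diffAt_apply,
    homotopyAt_apply, LinearMap.zero_apply, Pi.zero_apply, Multiset.mem_cons, mem_insert,
    mem_erase, hij, hij.symm, false_or, ne_eq, not_false_eq_true, true_and]
  by_cases hC : i ∈ m ∧ i ∉ s ∧ j ∈ s
  · obtain ⟨him, his, hjs⟩ := hC
    simp only [him, his, hjs, not_false_eq_true, and_self, if_true]
    rw [erase_insert_of_ne hij, Multiset.count_erase_of_ne hij.symm,
      Multiset.erase_cons_tail m hij.symm, koszulSign_insert (fun h => his (mem_of_mem_erase h)),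
      koszulSign_erase hjs i]
    rcases lt_or_gt_of_ne hij with h | h <;> simp only [h, lt_asymm h, if_true, if_false] <;> ring
  · split_ifs <;> first | ring1 | tauto

theorem diffAt_mul_homotopyAt_add_self_apply (i : ι) (G : Total ι R) (m : Multiset ι)
    (s : Finset ι) :
    (diffAt i * homotopyAt i + homotopyAt i * diffAt i : Module.End R (Total ι R)) G m s =
      ((m.count i : R) + if i ∈ s then 1 else 0) * G m s := by
  simp only [LinearMap.add_apply, Pi.add_apply, Module.End.mul_apply, diffAt_apply,
    homotopyAt_apply]
  by_cases his : i ∈ s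
  · simp only [his, not_true_eq_false, and_false, if_false, zero_add, if_true,
      Multiset.mem_cons_self, notMem_erase, not_false_eq_true, and_self, Multiset.erase_cons_head,
      insert_erase his]
    push_cast
    linear_combination ((m.count i : R) + 1) * G m s * koszulSign_mul_self (R := R) (s.erase i) i
  · by_cases him : i ∈ m
    · simp only [his, him, not_false_eq_true, and_self, if_true, mem_insert_self, if_false,
        add_zero, erase_insert his, Multiset.cons_erase him, Multiset.count_erase_self,
        Nat.sub_add_cancel (Multiset.count_pos.2 him)]
      linear_combination (m.count i : R) * G m s * koszulSign_mul_self (R := R) s i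
    · simp [his, him]

section Sum

variable [Fintype ι]

def totalDiff : Module.End R (Total ι R) := ∑ i, diffAt i

def totalHomotopy : Module.End R (Total ι R) := ∑ j, homotopyAt j

theorem totalDiff_apply (G : Total ι R) (m : Multiset ι) (s : Finset ι) :
    totalDiff G m s = ∑ i, diffAt i G m s := by
  rw [totalDiff, LinearMap.sum_apply, Finset.sum_apply, Finset.sum_apply]

theorem totalHomotopy_apply (G : Total ι R) (m : Multiset ι) (s : Finset ι) :
    totalHomotopy G m s = ∑ j, homotopyAt j G m s := by
  rw [totalHomotopy, LinearMap.sum_apply, Finset.sum_apply, Finset.sum_apply]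

theorem totalDiff_apply_zero (G : Total ι R) (s : Finset ι) : totalDiff G 0 s = 0 := by
  rw [totalDiff_apply]
  exact sum_eq_zero fun i _ => by simp [diffAt_apply]

theorem totalDiff_mul_self : totalDiff * totalDiff = (0 : Module.End R (Total ι R)) := by
  rw [totalDiff, sum_mul_sum]
  exact sum_sum_eq_zero_of_antisymm _ (fun i j hij => diffAt_mul_add_of_ne hij) diffAt_mul_self

theorem totalDiff_mul_totalHomotopy_add_apply (G : Total ι R) (m : Multiset ι) (s : Finset ι) :
    (totalDiff * totalHomotopy + totalHomotopy * totalDiff : Module.End R (Total ι R)) G m s =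
      ((Multiset.card m + #s : ℕ) : R) * G m s := by
  have hdiag : totalDiff * totalHomotopy + totalHomotopy * totalDiff =
      ∑ i, (diffAt i * homotopyAt i + homotopyAt i * diffAt i : Module.End R (Total ι R)) := by
    rw [totalDiff, totalHomotopy, sum_mul_sum, sum_mul_sum, sum_comm (γ := ι), ← sum_add_distrib]
    refine sum_congr rfl fun i _ => ?_
    rw [← sum_add_distrib]
    exact sum_eq_single i (fun j _ hji => diffAt_mul_homotopyAt_add_of_ne hji) (by simp)
  rw [hdiag, LinearMap.sum_apply, Finset.sum_apply, Finset.sum_apply]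
  simp only [diffAt_mul_homotopyAt_add_self_apply, ← sum_mul, sum_add_distrib, sum_boole,
    filter_univ_mem]
  rw [← Nat.cast_sum, Multiset.sum_count_eq_card (fun a _ => mem_univ a)]
  push_cast
  ring

theorem totalDiff_totalHomotopy_apply_of_totalDiff_eq_zero {G : Total ι R}
    (hG : totalDiff G = 0) (m : Multiset ι) (s : Finset ι) :
    totalDiff (totalHomotopy G) m s = ((Multiset.card m + #s : ℕ) : R) * G m s := by
  rw [← totalDiff_mul_totalHomotopy_add_apply, LinearMap.add_apply, Module.End.mul_apply,
    Module.End.mul_apply, hG, map_zero, Pi.add_apply, Pi.add_apply, Pi.zero_apply,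
    Pi.zero_apply, add_zero]

end Sum

end Total

section Graded

omit [CharZero K]

variable {K n}

def toTotal (p q : ℕ) : SL K n p q →ₗ[K] Total (Fin n) K where
  toFun F m s := if h : Multiset.card m = p ∧ #s = q then F (⟨m, h.1⟩, ⟨s, h.2⟩) else 0
  map_add' F F' := by
    ext m s
    simp only [Pi.add_apply]
    split_ifs <;> simp
  map_smul' c F := by
    ext m s
    simp only [Pi.smul_apply, smul_eq_mul, RingHom.id_apply]
    split_ifs <;> simp

theorem toTotal_apply {p q : ℕ} (F : SL K n p q) {m : Multiset (Fin n)} {s : Finset (Fin n)}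
    (hm : Multiset.card m = p) (hs : #s = q) :
    toTotal p q F m s = F (⟨m, hm⟩, ⟨s, hs⟩) :=
  dif_pos ⟨hm, hs⟩

theorem toTotal_apply_of_not_card {p q : ℕ} (F : SL K n p q) {m : Multiset (Fin n)}
    {s : Finset (Fin n)} (h : ¬(Multiset.card m = p ∧ #s = q)) :
    toTotal p q F m s = 0 :=
  dif_neg h

theorem toTotal_injective (p q : ℕ) : Function.Injective (toTotal (K := K) (n := n) p q) :=
  fun F F' h => funext fun ⟨⟨m, hm⟩, ⟨s, hs⟩⟩ => by
    have h_ms := congrFun (congrFun h m) s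
    rwa [toTotal_apply F hm hs, toTotal_apply F' hm hs] at h_ms

theorem phi_apply {p q : ℕ} (F : SL K n p (q + 1))
    (ms : Sym (Fin n) (p + 1) × {s : Finset (Fin n) // #s = q}) :
    phi K n p q F ms = totalDiff (toTotal p (q + 1) F) ms.1 ms.2.1 := by
  rw [totalDiff_apply, phi, LinearMap.coe_mk, AddHom.coe_mk]
  refine sum_congr rfl fun j _ => ?_
  by_cases h : j ∈ (ms.1 : Multiset (Fin n)) ∧ j ∉ ms.2.1
  · rw [dif_pos h, diffAt_apply, if_pos h, toTotal_apply]
    rfl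
  · rw [dif_neg h, diffAt_apply, if_neg h]

theorem toTotal_phi (p q : ℕ) (F : SL K n p (q + 1)) :
    toTotal (p + 1) q (phi K n p q F) = totalDiff (toTotal p (q + 1) F) := by
  ext m s
  by_cases hms : Multiset.card m = p + 1 ∧ #s = q
  · rw [toTotal_apply _ hms.1 hms.2, phi_apply]
    rfl
  · rw [toTotal_apply_of_not_card _ hms, totalDiff_apply]
    refine (sum_eq_zero fun i _ => ?_).symm
    rw [diffAt_apply]
    split_ifs with hi
    · rw [toTotal_apply_of_not_card, mul_zero]
      have hm_pos := Multiset.card_pos_iff_exists_mem.2 ⟨i, hi.1⟩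
      rw [Multiset.card_erase_of_mem hi.1, Nat.pred_eq_sub_one, card_insert_of_notMem hi.2]
      omega
    · rfl

def homotopy (p q : ℕ) (F : SL K n (p + 1) q) : SL K n p (q + 1) :=
  fun ms => totalHomotopy (toTotal (p + 1) q F) ms.1 ms.2.1

theorem toTotal_homotopy (p q : ℕ) (F : SL K n (p + 1) q) :
    toTotal p (q + 1) (homotopy p q F) = totalHomotopy (toTotal (p + 1) q F) := by
  ext m s
  by_cases hms : Multiset.card m = p ∧ #s = q + 1
  · rw [toTotal_apply _ hms.1 hms.2]
    rfl
  · rw [toTotal_apply_of_not_card _ hms, totalHomotopy_apply]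
    refine (sum_eq_zero fun j _ => ?_).symm
    rw [homotopyAt_apply]
    split_ifs with hj
    · rw [toTotal_apply_of_not_card, mul_zero]
      have hs_pos := card_pos.2 ⟨j, hj⟩
      rw [Multiset.card_cons, card_erase_of_mem hj]
      omega
    · rfl

theorem natCast_card_add_mul_toTotal {p q : ℕ} (F : SL K n p q) (m : Multiset (Fin n))
    (s : Finset (Fin n)) :
    ((Multiset.card m + #s : ℕ) : K) * toTotal p q F m s = ((p + q : ℕ) : K) * toTotal p q F m s := by
  by_cases hms : Multiset.card m = p ∧ #s = q
  · rw [hms.1, hms.2]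
  · rw [toTotal_apply_of_not_card _ hms, mul_zero, mul_zero]

theorem phi_phi (p q : ℕ) (F : SL K n p (q + 2)) :
    phi K n (p + 1) q (phi K n p (q + 1) F) = 0 :=
  toTotal_injective _ _ <| by
    rw [toTotal_phi, toTotal_phi, ← Module.End.mul_apply, totalDiff_mul_self,
      LinearMap.zero_apply, map_zero]

theorem phi_homotopy_of_totalDiff_eq_zero {p q : ℕ} (F : SL K n (p + 1) q)
    (hF : totalDiff (toTotal (p + 1) q F) = 0) :
    phi K n p q (homotopy p q F) = ((p + 1 + q : ℕ) : K) • F := by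
  apply toTotal_injective
  ext m s
  rw [toTotal_phi, toTotal_homotopy, totalDiff_totalHomotopy_apply_of_totalDiff_eq_zero hF,
    natCast_card_add_mul_toTotal, map_smul, Pi.smul_apply, Pi.smul_apply, smul_eq_mul]

theorem totalDiff_toTotal_exteriorDegree_zero {p : ℕ} (F : SL K n p 0) : totalDiff (toTotal p 0 F) = 0 := by
  ext m s
  rw [totalDiff_apply]
  refine sum_eq_zero fun i _ => ?_
  rw [diffAt_apply]
  split_ifs with hi
  · rw [toTotal_apply_of_not_card _ (fun h => by simpa using h.2), mul_zero]
  · rfl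

end Graded

section

variable {K n}

theorem mem_range_phi_of_totalDiff_eq_zero {p q : ℕ} (F : SL K n (p + 1) q)
    (hF : totalDiff (toTotal (p + 1) q F) = 0) : F ∈ LinearMap.range (phi K n p q) := by
  have hc : ((p + 1 + q : ℕ) : K) ≠ 0 := Nat.cast_ne_zero.2 (by omega)
  refine ⟨((p + 1 + q : ℕ) : K)⁻¹ • homotopy p q F, ?_⟩
  rw [map_smul, phi_homotopy_of_totalDiff_eq_zero F hF, smul_smul, inv_mul_cancel₀ hc, one_smul]

theorem phi_exact (p q : ℕ) : Function.Exact (phi K n p (q + 1)) (phi K n (p + 1) q) := by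
  intro F
  constructor
  · intro hF
    exact mem_range_phi_of_totalDiff_eq_zero F (by rw [← toTotal_phi, hF, map_zero])
  · rintro ⟨F', rfl⟩
    exact phi_phi p q F'

theorem phi_surjective (p : ℕ) : Function.Surjective (phi K n p 0) :=
  fun F => mem_range_phi_of_totalDiff_eq_zero F (totalDiff_toTotal_exteriorDegree_zero F)

theorem phi_zero_injective (q : ℕ) : Function.Injective (phi K n 0 q) := by
  rw [injective_iff_map_eq_zero]
  intro F hF
  funext ⟨⟨m, hm⟩, ⟨s, hs⟩⟩
  obtain rfl := Multiset.card_eq_zero.1 hm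
  have hF' : totalDiff (toTotal 0 (q + 1) F) = 0 := by rw [← toTotal_phi, hF, map_zero]
  have h := totalDiff_totalHomotopy_apply_of_totalDiff_eq_zero hF' 0 s
  rw [natCast_card_add_mul_toTotal, toTotal_apply F hm hs, totalDiff_apply_zero] at h
  exact (mul_eq_zero.1 h.symm).resolve_left (Nat.cast_ne_zero.2 (by omega))

end

theorem stmt0 (k : ℕ) :
    (∀ p q : ℕ, p + q + 2 = k →
      Function.Exact (phi K n p (q + 1)) (phi K n (p + 1) q)) ∧
    (∀ q : ℕ, q + 1 = k → Function.Injective (phi K n 0 q)) ∧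
    (∀ p : ℕ, p + 1 = k → Function.Surjective (phi K n p 0)) :=
  ⟨fun p q _ => phi_exact p q, fun q _ => phi_zero_injective q, fun p _ => phi_surjective p⟩

end Koszul
end

section
/- For a chain morphism ρ : A_* → B_*, there is a canonical isomorphism H_n(s(ρ)) ≅ ker(ρ̂ : Ĥ_n(A,ρ) → B_n), where ρ̂[(a,b)] = ρ(a) − d_B(b). -/
/-!
A cycle `(a, b)` of `s(ρ)` is a pair with `d a = 0` and `ρ a = d b`, that is, exactly a pair of
`Z A ⊕ B` killed by `ρ̂`; this identifies the image. Injectivity holds because both families of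
relations defining `Ĥ(A, ρ)` are boundaries of `s(ρ)`, so a cone cycle that vanishes in `Ĥ(A, ρ)`
is already a boundary.
-/

open CategoryTheory

namespace ArithK

variable (C D : ChainComplex AddCommGrpCat ℤ) (ρ : C ⟶ D)

lemma dd_apply (E : ChainComplex AddCommGrpCat ℤ) (i j k : ℤ) (x : E.X i) :
    E.d j k (E.d i j x) = 0 :=
  by rw [← ConcreteCategory.comp_apply, E.d_comp_d]; rfl

lemma comm_apply (i j : ℤ) (x : C.X i) :
    D.d i j (ρ.f i x) = ρ.f j (C.d i j x) :=
  by rw [← ConcreteCategory.comp_apply, ← ConcreteCategory.comp_apply, ρ.comm]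

lemma d_congr_zero (E : ChainComplex AddCommGrpCat ℤ) {i j j' : ℤ} (h : j = j') (x : E.X i)
    (hx : E.d i j x = 0) : E.d i j' x = 0 := by subst h; exact hx

def cyclePairs (n : ℤ) : AddSubgroup (C.X n × D.X (n + 1)) where
  carrier := {p | C.d n (n - 1) p.1 = 0}
  add_mem' := by
    intro a b ha hb
    simp only [Set.mem_setOf_eq, Prod.fst_add, map_add] at *
    rw [ha, hb, add_zero]
  zero_mem' := by simp
  neg_mem' := by
    intro a ha
    simp only [Set.mem_setOf_eq, Prod.fst_neg, map_neg] at *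
    rw [ha, neg_zero]

def relIn (n : ℤ) : AddSubgroup (cyclePairs C D n) :=
  AddSubgroup.closure
    ({p | ∃ b' : D.X (n + 1 + 1), (p : C.X n × D.X (n + 1)) = (0, D.d (n + 1 + 1) (n + 1) b')} ∪
     {p | ∃ a' : C.X (n + 1), (p : C.X n × D.X (n + 1)) = (C.d (n + 1) n a', ρ.f (n + 1) a')})

abbrev ModH (n : ℤ) := cyclePairs C D n ⧸ relIn C D ρ n

/-- Cycles of the simple complex `s(ρ)` in degree `j`. -/
def cycS (j : ℤ) : AddSubgroup (C.X j × D.X (j + 1)) where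
  carrier := {p | C.d j (j - 1) p.1 = 0 ∧ ρ.f j p.1 - D.d (j + 1) j p.2 = 0}
  add_mem' := by
    rintro a b ⟨ha1, ha2⟩ ⟨hb1, hb2⟩
    refine ⟨?_, ?_⟩
    · show C.d j (j - 1) (a.1 + b.1) = 0
      rw [map_add, ha1, hb1, add_zero]
    · show ρ.f j (a.1 + b.1) - D.d (j + 1) j (a.2 + b.2) = 0
      rw [map_add, map_add, show ρ.f j a.1 + ρ.f j b.1 - (D.d (j + 1) j a.2 + D.d (j + 1) j b.2)
            = (ρ.f j a.1 - D.d (j + 1) j a.2) + (ρ.f j b.1 - D.d (j + 1) j b.2) by abel,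
        ha2, hb2, add_zero]
  zero_mem' := by simp
  neg_mem' := by
    rintro a ⟨ha1, ha2⟩
    refine ⟨?_, ?_⟩
    · show C.d j (j - 1) (-a.1) = 0
      rw [map_neg, ha1, neg_zero]
    · show ρ.f j (-a.1) - D.d (j + 1) j (-a.2) = 0
      rw [map_neg, map_neg, show -ρ.f j a.1 - -D.d (j + 1) j a.2
            = -(ρ.f j a.1 - D.d (j + 1) j a.2) by abel, ha2, neg_zero]

/-- Boundaries of the simple complex `s(ρ)` in degree `j`. -/
def bdryS (j : ℤ) : AddSubgroup (cycS C D ρ j) where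
  carrier := {x | ∃ (a' : C.X (j + 1)) (b' : D.X (j + 1 + 1)),
    (x : C.X j × D.X (j + 1)) =
      (C.d (j + 1) j a', ρ.f (j + 1) a' - D.d (j + 1 + 1) (j + 1) b')}
  add_mem' := by
    rintro x y ⟨a1, b1, hx⟩ ⟨a2, b2, hy⟩
    refine ⟨a1 + a2, b1 + b2, ?_⟩
    show ((x : C.X j × D.X (j + 1)) + (y : C.X j × D.X (j + 1))) = _
    rw [hx, hy]
    apply Prod.ext
    · show C.d (j + 1) j a1 + C.d (j + 1) j a2 = C.d (j + 1) j (a1 + a2)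
      rw [map_add]
    · show (ρ.f (j + 1) a1 - D.d (j + 1 + 1) (j + 1) b1) +
          (ρ.f (j + 1) a2 - D.d (j + 1 + 1) (j + 1) b2) =
          ρ.f (j + 1) (a1 + a2) - D.d (j + 1 + 1) (j + 1) (b1 + b2)
      rw [map_add, map_add]
      abel
  zero_mem' := ⟨0, 0, by simp; rfl⟩
  neg_mem' := by
    rintro x ⟨a1, b1, hx⟩
    refine ⟨-a1, -b1, ?_⟩
    show -(x : C.X j × D.X (j + 1)) = _
    rw [hx]
    apply Prod.ext
    · show -(C.d (j + 1) j a1) = C.d (j + 1) j (-a1)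
      rw [map_neg]
    · show -(ρ.f (j + 1) a1 - D.d (j + 1 + 1) (j + 1) b1) =
          ρ.f (j + 1) (-a1) - D.d (j + 1 + 1) (j + 1) (-b1)
      rw [map_neg, map_neg]
      abel

/-- Homology of the simple complex `s(ρ)` in degree `j`. -/
abbrev Hs (j : ℤ) := cycS C D ρ j ⧸ bdryS C D ρ j

/-- Inclusion of cone cycles into pairs. -/
noncomputable def alphaCore (n : ℤ) : cycS C D ρ (n + 1) →+ cyclePairs C D (n + 1) where
  toFun x := ⟨x.1, x.2.1⟩
  map_zero' := rfl
  map_add' x y := rfl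

/-- `H_{n+1}(s(ρ)) → Ĥ_{n+1}(A,ρ)`. -/
noncomputable def alphaMap (n : ℤ) : Hs C D ρ (n + 1) →+ ModH C D ρ (n + 1) :=
  QuotientAddGroup.lift (bdryS C D ρ (n + 1))
    ((QuotientAddGroup.mk' (relIn C D ρ (n + 1))).comp (alphaCore C D ρ n))
    (by
      rintro x ⟨a', b', hx⟩
      rw [AddMonoidHom.mem_ker, AddMonoidHom.comp_apply, QuotientAddGroup.mk'_apply,
        QuotientAddGroup.eq_zero_iff]
      have hmem : alphaCore C D ρ n x =
          (⟨(C.d (n + 1 + 1) (n + 1) a', ρ.f (n + 1 + 1) a'), by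
              show C.d (n + 1) (n + 1 - 1) _ = 0
              exact dd_apply C (n + 1 + 1) (n + 1) (n + 1 - 1) a'⟩ : cyclePairs C D (n + 1)) -
            ⟨(0, D.d (n + 1 + 1 + 1) (n + 1 + 1) b'), by
              show C.d (n + 1) (n + 1 - 1) 0 = 0
              simp⟩ := by
        apply Subtype.ext
        show (x : C.X (n + 1) × D.X (n + 1 + 1)) = _
        rw [hx]
        apply Prod.ext
        · show C.d (n + 1 + 1) (n + 1) a' = C.d (n + 1 + 1) (n + 1) a' - 0
          rw [sub_zero]
        · rfl
      rw [hmem]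
      exact sub_mem (AddSubgroup.subset_closure (Or.inr ⟨a', rfl⟩))
        (AddSubgroup.subset_closure (Or.inl ⟨b', rfl⟩)))

/-- `ρ̂ : Ĥ_{n+1}(A,ρ) → B_{n+1}`, `[(a,b)] ↦ ρ(a) − d_B(b)`. -/
noncomputable def rhoHatFull (n : ℤ) : ModH C D ρ (n + 1) →+ D.X (n + 1) :=
  QuotientAddGroup.lift (relIn C D ρ (n + 1))
    { toFun := fun p => ρ.f (n + 1) p.1.1 - D.d (n + 1 + 1) (n + 1) p.1.2
      map_zero' := by simp
      map_add' := fun x y => by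
        show ρ.f (n + 1) (x.1.1 + y.1.1) - D.d (n + 1 + 1) (n + 1) (x.1.2 + y.1.2) = _
        rw [map_add, map_add]
        abel }
    (by
      intro x hx
      refine AddSubgroup.closure_le _ |>.2 ?_ hx
      rintro p (⟨b', hb⟩ | ⟨a', ha⟩) <;>
        rw [SetLike.mem_coe, AddMonoidHom.mem_ker] <;>
        show ρ.f (n + 1) p.1.1 - D.d (n + 1 + 1) (n + 1) p.1.2 = 0
      · have h1 : p.1.1 = 0 := congrArg Prod.fst hb
        have h2 : p.1.2 = D.d (n + 1 + 1 + 1) (n + 1 + 1) b' := congrArg Prod.snd hb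
        rw [h1, h2, map_zero, dd_apply, sub_zero]
      · have h1 : p.1.1 = C.d (n + 1 + 1) (n + 1) a' := congrArg Prod.fst ha
        have h2 : p.1.2 = ρ.f (n + 1 + 1) a' := congrArg Prod.snd ha
        rw [h1, h2, ← comm_apply, sub_self])

def coneDiff (m : ℤ) : C.X (m + 1) × D.X (m + 1 + 1) →+ C.X m × D.X (m + 1) :=
  ((C.d (m + 1) m).hom.comp (AddMonoidHom.fst _ _)).prod
    ((ρ.f (m + 1)).hom.comp (AddMonoidHom.fst _ _) -
      (D.d (m + 1 + 1) (m + 1)).hom.comp (AddMonoidHom.snd _ _))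

lemma coneDiff_apply (m : ℤ) (q : C.X (m + 1) × D.X (m + 1 + 1)) :
    coneDiff C D ρ m q = (C.d (m + 1) m q.1, ρ.f (m + 1) q.1 - D.d (m + 1 + 1) (m + 1) q.2) :=
  rfl

/-- The witnesses: `(0, d b') = ∂(0, -b')` and `(d a', ρ a') = ∂(a', 0)`. -/
lemma relIn_le_comap_range_coneDiff (m : ℤ) :
    relIn C D ρ m ≤ (coneDiff C D ρ m).range.comap (cyclePairs C D m).subtype := by
  refine (AddSubgroup.closure_le _).2 ?_
  rintro p (⟨b', hb⟩ | ⟨a', ha⟩)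
  · refine ⟨(0, -b'), ?_⟩
    rw [coneDiff_apply, AddSubgroup.subtype_apply, hb]
    simp
  · refine ⟨(a', 0), ?_⟩
    rw [coneDiff_apply, AddSubgroup.subtype_apply, ha]
    simp

lemma alphaMap_mk (n : ℤ) (x : cycS C D ρ (n + 1)) :
    alphaMap C D ρ n (QuotientAddGroup.mk x) = QuotientAddGroup.mk (alphaCore C D ρ n x) :=
  rfl

lemma alphaMap_injective (n : ℤ) : Function.Injective (alphaMap C D ρ n) := by
  rw [injective_iff_map_eq_zero]
  intro x hx
  induction x using QuotientAddGroup.induction_on with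
  | H x =>
    rw [alphaMap_mk, QuotientAddGroup.eq_zero_iff] at hx
    obtain ⟨⟨a', b'⟩, h⟩ := relIn_le_comap_range_coneDiff C D ρ (n + 1) hx
    exact (QuotientAddGroup.eq_zero_iff x).2 ⟨a', b', h.symm⟩

lemma range_alphaMap_eq_ker_rhoHatFull (n : ℤ) :
    (alphaMap C D ρ n).range = (rhoHatFull C D ρ n).ker := by
  ext z
  constructor
  · rintro ⟨y, rfl⟩
    induction y using QuotientAddGroup.induction_on with
    | H x => exact x.2.2
  · intro hz
    induction z using QuotientAddGroup.induction_on with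
    | H p => exact ⟨QuotientAddGroup.mk ⟨p.1, p.2, hz⟩, rfl⟩

theorem stmt8 (n : ℤ) :
    Function.Injective (alphaMap C D ρ n) ∧
      (alphaMap C D ρ n).range = (rhoHatFull C D ρ n).ker :=
  ⟨alphaMap_injective C D ρ n, range_alphaMap_eq_ker_rhoHatFull C D ρ n⟩

end ArithK
end

section
/- Let R be a λ-ring which is a Q-algebra, with Adams operations ψ^k. Define Ψ^k(x) = Σ_{p=0}^{k} (−1)^{k−p+1}(k−p) s^p(x) λ^{k−p}(x) (the 'secondary Euler characteristic of the Koszul complex'). Then Ψ^k satisfies the Newton recursion Ψ^k(x) = (−1)^{k+1} k λ^k(x) − Σ_{s=1}^{k−1} (−1)^{s} Ψ^{k−s}(x) λ^{s}(x), and consequently Ψ^k(x) = ψ^k(x) for all x and all k ≥ 1. -/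
/-!
STATEMENT 15: Let R be a λ-ring which is a Q-algebra, with Adams operations ψ^k.
Define Ψ^k(x) = Σ_{p=0}^{k} (−1)^{k−p+1}(k−p) s^p(x) λ^{k−p}(x) (the secondary Euler
characteristic of the Koszul complex). Then Ψ^k satisfies the Newton recursion
Ψ^k(x) = (−1)^{k+1} k λ^k(x) − Σ_{s=1}^{k−1} (−1)^{s} Ψ^{k−s}(x) λ^{s}(x),
and consequently Ψ^k(x) = ψ^k(x) for all x and all k ≥ 1.
-/

class LambdaRing (R : Type*) [CommRing R] where
  lam : ℕ → R → R
  lam_zero : ∀ x, lam 0 x = 1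
  lam_one : ∀ x, lam 1 x = x
  lam_add : ∀ k x y, lam k (x + y) = ∑ i ∈ Finset.range (k + 1), lam i x * lam (k - i) y

/-- Symmetric power operations: `s^0 = 1`, `s^k = Σ_{i=1}^k (−1)^{i+1} λ^i s^{k−i}`. -/
def sOp {R : Type*} [CommRing R] (l : ℕ → R) : ℕ → R
  | 0 => 1
  | (k + 1) => ∑ i ∈ Finset.range (k + 1), (-1 : R) ^ i * l (i + 1) * sOp l (k - i)
  termination_by k => k
  decreasing_by omega

/-- Adams operations via the Newton recursion
`ψ^k = ψ^{k−1}λ^1 − ψ^{k−2}λ^2 + … + (−1)^{k−1} k λ^k`, `ψ^1 = id`. -/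
def psiOp {R : Type*} [CommRing R] (l : ℕ → R) : ℕ → R
  | 0 => 0
  | (k + 1) =>
      (∑ i ∈ Finset.range k, (-1 : R) ^ i * l (i + 1) * psiOp l (k - i)) +
        (-1 : R) ^ k * ((k + 1 : ℕ) : R) * l (k + 1)
  termination_by k => k
  decreasing_by omega

/-- The secondary Euler characteristic of the Koszul complex:
`Ψ^k = Σ_{p=0}^{k} (−1)^{k−p+1}(k−p) s^p λ^{k−p}`. -/
def PsiKos {R : Type*} [CommRing R] (l : ℕ → R) (k : ℕ) : R :=
  ∑ p ∈ Finset.range (k + 1),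
    (-1 : R) ^ (k - p + 1) * ((k - p : ℕ) : R) * sOp l p * l (k - p)

/-!
Writing `λ_t = Σ (-1)^n λ^n t^n` and `σ_t = Σ s^n t^n`, the recursion defining `s^n` says exactly
that `λ_t σ_t = 1`, and `Ψ^k` is the `t^k`-coefficient of `σ_t · D_t` with
`D_t = Σ (-1)^(n+1) n λ^n t^n = -t λ_t'`. Hence `λ_t · Ψ_t = D_t`, which, read coefficientwise,
is the Newton recursion. The Adams operations satisfy the same recursion by definition, and the
recursion determines its solution.
-/

section AdamsOperations

variable {R : Type*} [CommRing R]

def SatisfiesNewton (l f : ℕ → R) : Prop :=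
  ∀ k, f k = (-1 : R) ^ (k + 1) * (k : R) * l k -
    ∑ s ∈ Finset.Ico 1 k, (-1 : R) ^ s * f (k - s) * l s

theorem SatisfiesNewton.unique {l f g : ℕ → R} (hf : SatisfiesNewton l f)
    (hg : SatisfiesNewton l g) : f = g := by
  funext k
  induction k using Nat.strong_induction_on with
  | _ k ih =>
    rw [hf k, hg k]
    congr 1
    refine Finset.sum_congr rfl fun s hs => ?_
    rw [Finset.mem_Ico] at hs
    rw [ih (k - s) (by omega)]

theorem satisfiesNewton_psiOp (l : ℕ → R) : SatisfiesNewton l (psiOp l) := by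
  rintro (_ | n)
  · simp [psiOp]
  · rw [psiOp, Finset.sum_Ico_eq_sum_range, add_tsub_cancel_right]
    have hterm : ∀ i ∈ Finset.range n, (-1 : R) ^ (1 + i) * psiOp l (n + 1 - (1 + i)) * l (1 + i)
        = -((-1 : R) ^ i * l (i + 1) * psiOp l (n - i)) := fun i _ => by
      rw [show n + 1 - (1 + i) = n - i by omega, add_comm 1 i, pow_succ]
      ring
    rw [Finset.sum_congr rfl hterm, Finset.sum_neg_distrib]
    push_cast
    ring

theorem sOp_succ (l : ℕ → R) (k : ℕ) :
    sOp l (k + 1) = ∑ i ∈ Finset.range (k + 1), (-1 : R) ^ i * l (i + 1) * sOp l (k - i) := by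
  rw [sOp]

open PowerSeries

theorem mk_neg_one_pow_mul_mk_sOp {l : ℕ → R} (hl : l 0 = 1) :
    mk (fun n => (-1 : R) ^ n * l n) * mk (sOp l) = 1 := by
  ext (_ | n)
  · simp [hl, sOp]
  · rw [coeff_mul, Finset.Nat.sum_antidiagonal_eq_sum_range_succ_mk, Finset.sum_range_succ',
      coeff_one, if_neg n.succ_ne_zero]
    have hterm : ∀ i ∈ Finset.range (n + 1),
        coeff i.succ (mk fun n => (-1 : R) ^ n * l n) * coeff (n + 1 - i.succ) (mk (sOp l)) =
          -((-1 : R) ^ i * l (i + 1) * sOp l (n - i)) := fun i _ => by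
      simp only [coeff_mk, Nat.succ_sub_succ, pow_succ]
      ring
    rw [Finset.sum_congr rfl hterm, Finset.sum_neg_distrib, ← sOp_succ]
    simp [hl]

theorem PsiKos_eq_coeff (l : ℕ → R) (k : ℕ) :
    PsiKos l k = coeff k (mk (sOp l) * mk fun n => (-1 : R) ^ (n + 1) * (n : R) * l n) := by
  rw [coeff_mul, Finset.Nat.sum_antidiagonal_eq_sum_range_succ_mk, PsiKos]
  refine Finset.sum_congr rfl fun p _ => ?_
  simp only [coeff_mk]
  ring

theorem sum_neg_one_pow_mul_PsiKos {l : ℕ → R} (hl : l 0 = 1) (k : ℕ) :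
    ∑ s ∈ Finset.range (k + 1), (-1 : R) ^ s * l s * PsiKos l (k - s) =
      (-1 : R) ^ (k + 1) * (k : R) * l k := by
  have hseries : mk (fun n => (-1 : R) ^ n * l n) *
      (mk (sOp l) * mk fun n => (-1 : R) ^ (n + 1) * (n : R) * l n) =
        mk fun n => (-1 : R) ^ (n + 1) * (n : R) * l n := by
    rw [← mul_assoc, mk_neg_one_pow_mul_mk_sOp hl, one_mul]
  replace hseries := congrArg (coeff k) hseries
  rw [coeff_mul, Finset.Nat.sum_antidiagonal_eq_sum_range_succ_mk] at hseries
  simpa only [coeff_mk, ← PsiKos_eq_coeff] using hseries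

theorem satisfiesNewton_PsiKos {l : ℕ → R} (hl : l 0 = 1) : SatisfiesNewton l (PsiKos l) := by
  intro k
  have hconv := sum_neg_one_pow_mul_PsiKos hl k
  have hzero : PsiKos l 0 = 0 := by simpa [hl] using sum_neg_one_pow_mul_PsiKos hl 0
  rw [Finset.range_eq_Ico, Finset.sum_eq_sum_Ico_succ_bot k.succ_pos] at hconv
  rcases k.eq_zero_or_pos with rfl | hk
  · simpa using hzero
  rw [Finset.sum_Ico_succ_top hk, Nat.sub_self, hzero, mul_zero, add_zero, pow_zero, hl,
    one_mul, one_mul, Nat.sub_zero, Nat.succ_eq_add_one, zero_add] at hconv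
  rw [← hconv, add_sub_assoc, left_eq_add, sub_eq_zero]
  exact Finset.sum_congr rfl fun s _ => mul_right_comm _ _ _

end AdamsOperations

theorem stmt15_general {R : Type*} [CommRing R] [LambdaRing R] (x : R) (k : ℕ) :
    (PsiKos (fun i => LambdaRing.lam i x) k =
        (-1 : R) ^ (k + 1) * (k : R) * LambdaRing.lam k x -
          ∑ s ∈ Finset.Ico 1 k,
            (-1 : R) ^ s * PsiKos (fun i => LambdaRing.lam i x) (k - s) * LambdaRing.lam s x) ∧
      PsiKos (fun i => LambdaRing.lam i x) k = psiOp (fun i => LambdaRing.lam i x) k := by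
  have hnewton : SatisfiesNewton (fun i => LambdaRing.lam i x) _ :=
    satisfiesNewton_PsiKos (LambdaRing.lam_zero x)
  exact ⟨hnewton k, congrFun (hnewton.unique (satisfiesNewton_psiOp _)) k⟩

theorem stmt15 {R : Type*} [CommRing R] [Algebra ℚ R] [LambdaRing R] (x : R) (k : ℕ)
    (hk : 1 ≤ k) :
    (PsiKos (fun i => LambdaRing.lam i x) k =
        (-1 : R) ^ (k + 1) * (k : R) * LambdaRing.lam k x -
          ∑ s ∈ Finset.Ico 1 k,
            (-1 : R) ^ s * PsiKos (fun i => LambdaRing.lam i x) (k - s) * LambdaRing.lam s x) ∧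
      PsiKos (fun i => LambdaRing.lam i x) k = psiOp (fun i => LambdaRing.lam i x) k :=
  stmt15_general x k
end
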